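/- arXiv:1107.5985 — 2 statements merged into one kernel-verified Lean document; each statement's English description precedes it below -/
import Mathlib

section
/- Let X be a Polish space. A sequence of X-valued random variables (x_n) defined on a probability space converges in probability if and only if for every pair of subsequences (x_{n_k}) and (x_{m_k}), there exists a further subsequence such that the joint laws of (x_{n_{k_i}}, x_{m_{k_i}}) converge weakly to a probability measure ν on X × X satisfying ν({(x,y) ∈ X × X : x = y}) = 1. -/
/-!
A sequence converges in probability iff it is Cauchy in probability: along a subsequence with
`P(d(x_{φ j}, x_{φ (j+1)}) ≥ 2⁻ʲ) ≤ 2⁻ʲ` Borel–Cantelli makes `(x_{φ j})` a.s. Cauchy, completeness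
gives an a.s. limit, and the Cauchy property spreads convergence from the subsequence to the
whole sequence. If the joint laws of `(x_{n_k}, x_{m_k})` converge weakly to a measure carried by
the diagonal, testing against the bounded continuous function `min ε d(x, y)`, which vanishes on
the diagonal, and applying Markov's inequality gives `P(d(x_{n_k}, x_{m_k}) ≥ ε) → 0`. Since every
pair of subsequences has such a further subsequence, `(x_n)` is Cauchy in probability.
Conversely, if `x_n → y` in probability then `(x_{n_k}, x_{m_k}) → (y, y)` in probability, so the
joint laws already converge weakly to the law of `(y, y)`, without passing to a subsequence.
-/

open MeasureTheory Filter Topology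
open scoped ENNReal BoundedContinuousFunction

namespace MeasureTheory

variable {α ι E : Type*} {m : MeasurableSpace α} {μ : Measure α}

section PseudoMetric

variable [PseudoMetricSpace E]

def CauchyInMeasure {_ : MeasurableSpace α} (μ : Measure α) (f : ℕ → α → E) : Prop :=
  ∀ ε : ℝ, 0 < ε →
    Tendsto (fun p : ℕ × ℕ => μ {x | ε ≤ dist (f p.1 x) (f p.2 x)}) atTop (𝓝 0)

lemma measure_le_dist_le_add (μ : Measure α) (f g h : α → E) (ε : ℝ) :
    μ {x | ε ≤ dist (f x) (h x)} ≤
      μ {x | ε / 2 ≤ dist (f x) (g x)} + μ {x | ε / 2 ≤ dist (g x) (h x)} := by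
  refine (measure_mono fun x hx => ?_).trans (measure_union_le _ _)
  by_contra hc
  simp only [Set.mem_union, Set.mem_ofPred_eq, not_or, not_le] at hc hx
  linarith [dist_triangle (f x) (g x) (h x)]

lemma CauchyInMeasure.tendstoInMeasure_of_subseq {f : ℕ → α → E} {g : α → E} {φ : ℕ → ℕ}
    (hf : CauchyInMeasure μ f) (hφ : Tendsto φ atTop atTop)
    (hfg : TendstoInMeasure μ (fun k => f (φ k)) atTop g) : TendstoInMeasure μ f atTop g := by
  rw [tendstoInMeasure_iff_dist] at hfg ⊢
  intro ε hε
  have hpair : Tendsto (fun n => (n, φ n)) atTop atTop := by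
    rw [← prod_atTop_atTop_eq]
    exact tendsto_id.prodMk hφ
  refine tendsto_of_tendsto_of_tendsto_of_le_of_le tendsto_const_nhds ?_ (fun _ => zero_le)
    fun n => measure_le_dist_le_add μ (f n) (f (φ n)) g ε
  simpa using ((hf _ (half_pos hε)).comp hpair).add (hfg _ (half_pos hε))

lemma CauchyInMeasure.exists_strictMono_measure_le_dist_succ_le {f : ℕ → α → E}
    (hf : CauchyInMeasure μ f) :
    ∃ φ : ℕ → ℕ, StrictMono φ ∧
      ∀ j, μ {x | (2⁻¹ : ℝ) ^ j ≤ dist (f (φ j) x) (f (φ (j + 1)) x)} ≤ 2⁻¹ ^ j := by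
  have h : ∀ j, ∀ᶠ k in atTop,
      ∀ q ≥ k, μ {x | (2⁻¹ : ℝ) ^ j ≤ dist (f k x) (f q x)} ≤ 2⁻¹ ^ j := by
    intro j
    obtain ⟨N, hN⟩ := eventually_atTop_prod_self.1 <|
      ENNReal.tendsto_nhds_zero.1 (hf ((2⁻¹ : ℝ) ^ j) (by positivity))
        ((2 : ℝ≥0∞)⁻¹ ^ j) (ENNReal.pow_pos (by simp) j)
    exact eventually_atTop.2 ⟨N, fun k hk q hq => hN k q hk (hk.trans hq)⟩
  obtain ⟨φ, hφ, hφf⟩ := extraction_forall_of_eventually h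
  exact ⟨φ, hφ, fun j => hφf j _ (hφ (Nat.lt_succ_self j)).le⟩

lemma ae_cauchySeq_of_measure_le_dist_succ_le {g : ℕ → α → E}
    (hg : ∀ j, μ {x | (2⁻¹ : ℝ) ^ j ≤ dist (g j x) (g (j + 1) x)} ≤ 2⁻¹ ^ j) :
    ∀ᵐ x ∂μ, CauchySeq fun j => g j x := by
  have hsum : ∑' j, μ {x | (2⁻¹ : ℝ) ^ j ≤ dist (g j x) (g (j + 1) x)} ≠ ∞ := by
    refine ne_top_of_le_ne_top ?_ (ENNReal.tsum_le_tsum hg)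
    simpa only [ENNReal.tsum_geometric, ENNReal.one_sub_inv_two, inv_inv] using
      ENNReal.ofNat_ne_top
  filter_upwards [ae_eventually_notMem hsum] with x hx
  refine cauchySeq_of_summable_dist <|
    (summable_geometric_of_lt_one (r := (2⁻¹ : ℝ)) (by norm_num) (by norm_num)
      |>.of_norm_bounded_eventually_nat ?_)
  filter_upwards [hx] with j hj
  simp only [not_le] at hj
  rw [Real.norm_of_nonneg dist_nonneg]
  exact hj.le

theorem CauchyInMeasure.exists_tendstoInMeasure [CompleteSpace E] [IsFiniteMeasure μ]
    {f : ℕ → α → E} (hf_meas : ∀ n, AEStronglyMeasurable (f n) μ) (hf : CauchyInMeasure μ f) :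
    ∃ g : α → E, StronglyMeasurable g ∧ TendstoInMeasure μ f atTop g := by
  obtain ⟨φ, hφ, hφf⟩ := hf.exists_strictMono_measure_le_dist_succ_le
  have hlim : ∀ᵐ x ∂μ, ∃ l, Tendsto (fun j => f (φ j) x) atTop (𝓝 l) := by
    filter_upwards [ae_cauchySeq_of_measure_le_dist_succ_le hφf] with x hx
    exact cauchySeq_tendsto_of_complete hx
  obtain ⟨g, hg, hfg⟩ :=
    exists_stronglyMeasurable_limit_of_tendsto_ae (fun j => hf_meas (φ j)) hlim
  exact ⟨g, hg, hf.tendstoInMeasure_of_subseq hφ.tendsto_atTop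
    (tendstoInMeasure_of_tendsto_ae (fun j => hf_meas (φ j)) hfg)⟩

lemma exists_strictMono_fst_snd_of_tendsto_atTop {u : ℕ → ℕ × ℕ} (hu : Tendsto u atTop atTop) :
    ∃ φ : ℕ → ℕ, StrictMono (fun k => (u (φ k)).1) ∧ StrictMono (fun k => (u (φ k)).2) := by
  rw [← prod_atTop_atTop_eq, tendsto_prod_iff'] at hu
  obtain ⟨φ, hφ, hfst⟩ := strictMono_subseq_of_tendsto_atTop hu.1
  obtain ⟨ψ, hψ, hsnd⟩ := strictMono_subseq_of_tendsto_atTop (hu.2.comp hφ.tendsto_atTop)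
  exact ⟨φ ∘ ψ, hfst.comp hψ, hsnd⟩

lemma cauchyInMeasure_of_forall_exists_subseq {f : ℕ → α → E}
    (h : ∀ n m : ℕ → ℕ, StrictMono n → StrictMono m → ∃ k : ℕ → ℕ, ∀ ε : ℝ, 0 < ε →
      Tendsto (fun i => μ {x | ε ≤ dist (f (n (k i)) x) (f (m (k i)) x)}) atTop (𝓝 0)) :
    CauchyInMeasure μ f := by
  intro ε hε
  by_contra hnot
  obtain ⟨s, hs, hfreq⟩ := not_tendsto_iff_exists_frequently_notMem.1 hnot
  obtain ⟨u, hu, hus⟩ := exists_seq_forall_of_frequently hfreq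
  obtain ⟨φ, hn, hm⟩ := exists_strictMono_fst_snd_of_tendsto_atTop hu
  obtain ⟨k, hk⟩ := h _ _ hn hm
  obtain ⟨i, hi⟩ := ((hk ε hε).eventually_mem hs).exists
  exact hus _ hi

variable (E) in
noncomputable def truncatedDist (ε : ℝ) : E × E →ᵇ ℝ :=
  .ofNormedAddCommGroup (fun p => min ε (dist p.1 p.2)) (continuous_const.min continuous_dist) |ε|
    fun _ => abs_le.2
      ⟨le_min (neg_abs_le ε) ((neg_nonpos.2 (abs_nonneg ε)).trans dist_nonneg),
        (min_le_left _ _).trans (le_abs_self ε)⟩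

@[simp]
lemma truncatedDist_apply (ε : ℝ) (p : E × E) : truncatedDist E ε p = min ε (dist p.1 p.2) :=
  rfl

lemma tendsto_measure_le_dist_of_tendsto_integral [MeasurableSpace E] [IsFiniteMeasure μ]
    {u v : ℕ → α → E}
    (hu : ∀ i, AEStronglyMeasurable (u i) μ) (hv : ∀ i, AEStronglyMeasurable (v i) μ)
    {ν : Measure (E × E)} (hν : ∀ᵐ p ∂ν, p.1 = p.2)
    (hlim : ∀ f : E × E →ᵇ ℝ,
      Tendsto (fun i => ∫ x, f (u i x, v i x) ∂μ) atTop (𝓝 (∫ p, f p ∂ν)))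
    {ε : ℝ} (hε : 0 < ε) :
    Tendsto (fun i => μ {x | ε ≤ dist (u i x) (v i x)}) atTop (𝓝 0) := by
  set g := truncatedDist E ε
  have hg_diag : ∫ p, g p ∂ν = 0 :=
    integral_eq_zero_of_ae (by filter_upwards [hν] with p hp; simp [g, hp, hε.le])
  have hmarkov : ∀ i, μ.real {x | ε ≤ dist (u i x) (v i x)} ≤
      ε⁻¹ * ∫ x, g (u i x, v i x) ∂μ := by
    intro i
    have hint : Integrable (fun x => g (u i x, v i x)) μ :=
      .of_bound (g.continuous.comp_aestronglyMeasurable ((hu i).prodMk (hv i))) ‖g‖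
        (ae_of_all _ fun x => g.norm_coe_le_norm _)
    have := mul_meas_ge_le_integral_of_nonneg
      (ae_of_all _ fun x => le_min hε.le dist_nonneg) hint ε
    simp only [le_min_iff, le_refl, true_and] at this
    rwa [le_inv_mul_iff₀ hε]
  have hreal : Tendsto (fun i => μ.real {x | ε ≤ dist (u i x) (v i x)}) atTop (𝓝 0) :=
    squeeze_zero (fun _ => measureReal_nonneg) hmarkov
      (by simpa [hg_diag] using (hlim g).const_mul ε⁻¹)
  exact (ENNReal.tendsto_toReal_iff (fun _ => measure_ne_top _ _) ENNReal.zero_ne_top).1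
    (by simpa [measureReal_def] using hreal)

end PseudoMetric

section PseudoEMetric

variable [PseudoEMetricSpace E]

lemma TendstoInMeasure.prodMk {F : Type*} [PseudoEMetricSpace F] {l : Filter ι}
    {u : ι → α → E} {v : ι → α → F} {y : α → E} {z : α → F}
    (hu : TendstoInMeasure μ u l y) (hv : TendstoInMeasure μ v l z) :
    TendstoInMeasure μ (fun i x => (u i x, v i x)) l (fun x => (y x, z x)) := by
  intro ε hε
  have hsplit : ∀ i, μ {x | ε ≤ edist (u i x, v i x) (y x, z x)} ≤
      μ {x | ε ≤ edist (u i x) (y x)} + μ {x | ε ≤ edist (v i x) (z x)} := fun i =>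
    (measure_mono fun x hx => by simpa [Prod.edist_eq, le_max_iff] using hx).trans
      (measure_union_le _ _)
  have hsum := (hu ε hε).add (hv ε hε)
  rw [add_zero] at hsum
  exact tendsto_of_tendsto_of_tendsto_of_le_of_le tendsto_const_nhds hsum (fun _ => zero_le)
    hsplit

lemma TendstoInMeasure.tendsto_integral_comp [IsProbabilityMeasure μ] [MeasurableSpace E]
    [BorelSpace E] {l : Filter ι} [l.IsCountablyGenerated] [l.NeBot] {u : ι → α → E}
    {y : α → E} (h : TendstoInMeasure μ u l y) (hu : ∀ i, AEMeasurable (u i) μ) (f : E →ᵇ ℝ) :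
    Tendsto (fun i => ∫ x, f (u i x) ∂μ) l (𝓝 (∫ x, f (y x) ∂μ)) := by
  have hdist := (h.tendstoInDistribution hu).tendsto
  have hy := h.aemeasurable hu
  simpa [integral_map (hu _) f.continuous.aestronglyMeasurable,
    integral_map hy f.continuous.aestronglyMeasurable] using
    ProbabilityMeasure.tendsto_iff_forall_integral_tendsto.1 hdist f

end PseudoEMetric

end MeasureTheory

/-- Gyöngy–Krylov lemma: on a Polish space `X`, a sequence of `X`-valued
random variables `(x_n)` converges in probability iff for every pair of subsequences
there is a further subsequence along which the joint laws converge weakly to a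
probability measure `ν` on `X × X` concentrated on the diagonal. -/
theorem stmt4 {Ω : Type*} [MeasurableSpace Ω] (P : Measure Ω) [IsProbabilityMeasure P]
    {X : Type*} [MetricSpace X] [CompleteSpace X] [TopologicalSpace.SeparableSpace X]
    [MeasurableSpace X] [BorelSpace X]
    (x : ℕ → Ω → X) (hx : ∀ n, Measurable (x n)) :
    (∃ y : Ω → X, Measurable y ∧ TendstoInMeasure P x atTop y) ↔
      (∀ n m : ℕ → ℕ, StrictMono n → StrictMono m →
        ∃ k : ℕ → ℕ, StrictMono k ∧
          ∃ ν : Measure (X × X), IsProbabilityMeasure ν ∧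
            (∀ f : BoundedContinuousFunction (X × X) ℝ,
              Tendsto (fun i => ∫ ω, f (x (n (k i)) ω, x (m (k i)) ω) ∂P) atTop
                (nhds (∫ p, f p ∂ν))) ∧
            ν {p : X × X | p.1 = p.2} = 1) := by
  have hdiag : MeasurableSet {p : X × X | p.1 = p.2} :=
    (isClosed_eq continuous_fst continuous_snd).measurableSet
  constructor
  · rintro ⟨y, hy, hxy⟩ n m hn hm
    have hyy : Measurable fun ω => (y ω, y ω) := hy.prodMk hy
    refine ⟨id, strictMono_id, P.map fun ω => (y ω, y ω),
      Measure.isProbabilityMeasure_map hyy.aemeasurable, fun f => ?_, ?_⟩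
    · rw [integral_map hyy.aemeasurable f.continuous.aestronglyMeasurable]
      exact ((hxy.comp hn.tendsto_atTop).prodMk (hxy.comp hm.tendsto_atTop))
        |>.tendsto_integral_comp (fun _ => ((hx _).prodMk (hx _)).aemeasurable) f
    · simp [Measure.map_apply hyy hdiag]
  · intro h
    have hxm : ∀ n, AEStronglyMeasurable (x n) P := fun n => (hx n).aestronglyMeasurable
    have hcauchy : CauchyInMeasure P x := by
      refine cauchyInMeasure_of_forall_exists_subseq fun n m hn hm => ?_
      obtain ⟨k, -, ν, hν, hlim, hν_diag⟩ := h n m hn hm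
      have hν_ae : ∀ᵐ p ∂ν, p.1 = p.2 := by
        rw [ae_iff_measure_eq hdiag.nullMeasurableSet, hν_diag, measure_univ]
      exact ⟨k, fun ε hε => tendsto_measure_le_dist_of_tendsto_integral (fun _ => hxm _)
        (fun _ => hxm _) hν_ae hlim hε⟩
    obtain ⟨y, hy, hxy⟩ := hcauchy.exists_tendstoInMeasure hxm
    exact ⟨y, hy.measurable, hxy⟩
end

section
/- Let W be a standard one-dimensional Brownian motion on [0,T]. For L > 0 define Σ_L = { ω : for all n ≥ 1, sup_{|t-s| ≤ n^{-6}, t,s ∈ [0,T]} |W(t,ω) - W(s,ω)| ≤ L/n }. Then there is a constant C depending only on T such that P(W ∉ Σ_L) ≤ C / L^4. Consequently, for every ε > 0 there exists L_ε with P(W ∉ Σ_{L_ε}) ≤ ε. -/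
/-!
Lévy's dyadic chaining. Call a path good if, on the grid of mesh `T / 2 ^ m` in `[0, T]`, every
increment between neighbouring grid points is at most `b * θ ^ m`, where `θ = 2 ^ (-1/6)`. By
Markov's inequality and `E (W t - W s) ^ 4 = 3 (t - s) ^ 2`, one such increment is too large with
probability at most `3 (T / 2 ^ m) ^ 2 / (b θ ^ m) ^ 4`; summing over the `2 ^ m` increments of
each level gives a geometric series of ratio `(2 θ ^ 4)⁻¹ < 1`, so a path fails to be good with
probability `O(b ^ (-4))`. On a good continuous path, approximating `t` and `s` by their grid
points of all finer levels gives `|W t - W s| ≤ b (1 + θ) / (1 - θ) θ ^ m` as soon as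
`|t - s| ≤ T / 2 ^ m`. Choosing `2 ^ m ≈ T n ^ 6` makes `θ ^ m ≈ (T n ^ 6) ^ (-1/6)`, which is the
bound `L / n` for `b` proportional to `L`.
-/

open MeasureTheory ProbabilityTheory Real Set Filter Topology
open scoped NNReal ENNReal

lemma iteratedDeriv_four_exp_mul_sq_div_two_zero (v : ℝ) :
    iteratedDeriv 4 (fun t => rexp (v * t ^ 2 / 2)) 0 = 3 * v ^ 2 := by
  have hexp : deriv (fun t => rexp (v * t ^ 2 / 2)) = fun t => v * t * rexp (v * t ^ 2 / 2) := by
    ext t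
    rw [_root_.deriv_exp (by fun_prop), deriv_div_const, deriv_const_mul_field']
    beta_reduce
    rw [deriv_pow_field]
    ring
  have hderiv_mul_exp (p : ℝ → ℝ) (hp : Differentiable ℝ p) : deriv (fun t => p t * rexp (v * t ^ 2 / 2)) =
      fun t => (deriv p t + p t * (v * t)) * rexp (v * t ^ 2 / 2) := by
    ext t
    rw [deriv_fun_mul (hp t) (by fun_prop), hexp]
    ring
  have h2 : deriv (fun t => v * t * rexp (v * t ^ 2 / 2)) =
      fun t => (v + v ^ 2 * t ^ 2) * rexp (v * t ^ 2 / 2) := by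
    rw [hderiv_mul_exp _ (by fun_prop), deriv_const_mul_id']
    ext t
    ring
  have h3 : deriv (fun t => (v + v ^ 2 * t ^ 2) * rexp (v * t ^ 2 / 2)) =
      fun t => (3 * v ^ 2 * t + v ^ 3 * t ^ 3) * rexp (v * t ^ 2 / 2) := by
    rw [hderiv_mul_exp _ (by fun_prop), deriv_const_add', deriv_const_mul_field']
    ext t
    beta_reduce
    rw [deriv_pow_field]
    ring
  rw [iteratedDeriv_succ', iteratedDeriv_succ', iteratedDeriv_succ', iteratedDeriv_one, hexp, h2,
    h3, hderiv_mul_exp _ (by fun_prop)]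
  beta_reduce
  rw [deriv_fun_add (by fun_prop) (by fun_prop)]
  simp

lemma integral_pow_four_gaussianReal (v : ℝ≥0) :
    ∫ x, x ^ 4 ∂gaussianReal 0 v = 3 * (v : ℝ) ^ 2 := by
  have h := iteratedDeriv_mgf_zero (X := fun x => x) (μ := gaussianReal 0 v) (by simp) 4
  simp only [mgf_fun_id_gaussianReal, zero_mul, zero_add,
    iteratedDeriv_four_exp_mul_sq_div_two_zero] at h
  simpa using h.symm

lemma lintegral_ofReal_pow_four_gaussianReal (v : ℝ≥0) :
    ∫⁻ x, ENNReal.ofReal (x ^ 4) ∂gaussianReal 0 v = ENNReal.ofReal (3 * (v : ℝ) ^ 2) := by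
  rw [← integral_pow_four_gaussianReal, ofReal_integral_eq_lintegral_ofReal _
    (ae_of_all _ fun x => by positivity)]
  simpa [Even.pow_abs ⟨2, rfl⟩] using
    (memLp_id_gaussianReal (μ := 0) (v := v) 4).integrable_norm_pow (by norm_num)

def DyadicIncrementsLE (f : ℝ → ℝ) (T b θ : ℝ) : Prop :=
  ∀ m k : ℕ, k < 2 ^ m → |f ((k + 1) * T / 2 ^ m) - f (k * T / 2 ^ m)| ≤ b * θ ^ m

noncomputable def dyadicFloor (T : ℝ) (m : ℕ) (u : ℝ) : ℝ := ⌊u * 2 ^ m / T⌋₊ * T / 2 ^ m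

section DyadicFloor

variable {T u : ℝ}

lemma dyadicFloor_nonneg (hT : 0 ≤ T) (m : ℕ) : 0 ≤ dyadicFloor T m u := by
  unfold dyadicFloor; positivity

lemma dyadicFloor_le (hT : 0 < T) (hu : 0 ≤ u) (m : ℕ) : dyadicFloor T m u ≤ u := by
  rw [dyadicFloor, div_le_iff₀ (by positivity), ← le_div_iff₀ hT]
  exact Nat.floor_le (by positivity)

lemma lt_dyadicFloor_add (hT : 0 < T) (u : ℝ) (m : ℕ) : u < dyadicFloor T m u + T / 2 ^ m := by
  have h := (div_lt_iff₀ hT).1 (Nat.lt_floor_add_one (u * 2 ^ m / T))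
  rw [dyadicFloor, ← add_div, lt_div_iff₀ (by positivity)]
  linarith

lemma dyadicFloor_mem_Icc (hT : 0 < T) (hu : u ∈ Icc 0 T) (m : ℕ) : dyadicFloor T m u ∈ Icc 0 T :=
  ⟨dyadicFloor_nonneg hT.le m, (dyadicFloor_le hT hu.1 m).trans hu.2⟩

lemma tendsto_dyadicFloor (hT : 0 < T) (hu : 0 ≤ u) :
    Tendsto (fun m => dyadicFloor T m u) atTop (𝓝 u) := by
  have hmesh : Tendsto (fun m : ℕ => T / 2 ^ m) atTop (𝓝 0) :=
    tendsto_const_nhds.div_atTop (tendsto_pow_atTop_atTop_of_one_lt one_lt_two)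
  refine tendsto_of_tendsto_of_tendsto_of_le_of_le (by simpa using hmesh.const_sub u)
    tendsto_const_nhds (fun m => ?_) (fun m => dyadicFloor_le hT hu m)
  linarith [lt_dyadicFloor_add hT u m]

lemma floor_mul_two_pow_div_le (hT : 0 < T) (hu : u ≤ T) (m : ℕ) : ⌊u * 2 ^ m / T⌋₊ ≤ 2 ^ m := by
  refine Nat.floor_le_of_le ?_
  rw [div_le_iff₀ hT]
  push_cast
  nlinarith [pow_pos (two_pos : (0 : ℝ) < 2) m]

end DyadicFloor

lemma exists_two_pow_le_max_one_lt (x : ℝ) : ∃ m : ℕ, (2 : ℝ) ^ m ≤ max 1 x ∧ x < 2 ^ (m + 1) := by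
  obtain ⟨m, hle, hlt⟩ := exists_nat_pow_near (le_max_left 1 x) one_lt_two
  exact ⟨m, hle, (le_max_right 1 x).trans_lt hlt⟩

namespace DyadicIncrementsLE

variable {f : ℝ → ℝ} {T b θ : ℝ}

lemma nonneg (H : DyadicIncrementsLE f T b θ) : 0 ≤ b := by
  simpa using (abs_nonneg _).trans (H 0 0 one_pos)

lemma abs_sub_le_of_index (H : DyadicIncrementsLE f T b θ) (hθ : 0 ≤ θ) {m i j : ℕ}
    (hi : i ≤ 2 ^ m) (hj : j ≤ 2 ^ m) (hij : i ≤ j + 1) (hji : j ≤ i + 1) :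
    |f (i * T / 2 ^ m) - f (j * T / 2 ^ m)| ≤ b * θ ^ m := by
  rcases (by omega : i = j ∨ i = j + 1 ∨ j = i + 1) with rfl | rfl | rfl
  · simpa using mul_nonneg H.nonneg (pow_nonneg hθ m)
  · simpa using H m j (by omega)
  · rw [abs_sub_comm]
    simpa using H m i (by omega)

lemma abs_sub_dyadicFloor_succ_le (H : DyadicIncrementsLE f T b θ) (hθ : 0 ≤ θ) (hT : 0 < T)
    {u : ℝ} (hu : u ∈ Icc 0 T) (m : ℕ) :
    |f (dyadicFloor T (m + 1) u) - f (dyadicFloor T m u)| ≤ b * θ ^ (m + 1) := by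
  set q := u * 2 ^ m / T
  have hq : 0 ≤ q := by have := hu.1; positivity
  have hq2 : u * 2 ^ (m + 1) / T = 2 * q := by ring
  have hlow : 2 * ⌊q⌋₊ ≤ ⌊2 * q⌋₊ := Nat.le_floor (by push_cast; linarith [Nat.floor_le hq])
  have hup : ⌊2 * q⌋₊ < 2 * ⌊q⌋₊ + 2 :=
    (Nat.floor_lt (by positivity)).2 (by push_cast; linarith [Nat.lt_floor_add_one q])
  have hcoarse : dyadicFloor T m u = ((2 * ⌊q⌋₊ : ℕ) : ℝ) * T / 2 ^ (m + 1) := by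
    rw [dyadicFloor, pow_succ]; push_cast; ring
  have hfine : ⌊2 * q⌋₊ ≤ 2 ^ (m + 1) := hq2 ▸ floor_mul_two_pow_div_le hT hu.2 (m + 1)
  rw [hcoarse, dyadicFloor, hq2]
  exact H.abs_sub_le_of_index hθ hfine (by omega) (by omega) (by omega)

lemma abs_sub_dyadicFloor_le (H : DyadicIncrementsLE f T b θ) (hθ : 0 ≤ θ) (hT : 0 < T)
    {u w : ℝ} (hu : u ∈ Icc 0 T) (hw : w ∈ Icc 0 T) {m : ℕ} (huw : |u - w| ≤ T / 2 ^ m) :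
    |f (dyadicFloor T m u) - f (dyadicFloor T m w)| ≤ b * θ ^ m := by
  have hscale : |u * 2 ^ m / T - w * 2 ^ m / T| ≤ 1 := by
    rw [show u * 2 ^ m / T - w * 2 ^ m / T = (u - w) / (T / 2 ^ m) by field_simp, abs_div,
      abs_of_pos (by positivity : 0 < T / 2 ^ m)]
    exact div_le_one_of_le₀ huw (by positivity)
  rw [abs_le] at hscale
  have hu0 : 0 ≤ u * 2 ^ m / T := by have := hu.1; positivity
  have hw0 : 0 ≤ w * 2 ^ m / T := by have := hw.1; positivity
  exact H.abs_sub_le_of_index hθ (floor_mul_two_pow_div_le hT hu.2 m)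
    (floor_mul_two_pow_div_le hT hw.2 m)
    ((Nat.floor_mono (by linarith)).trans (Nat.floor_add_one hw0).le)
    ((Nat.floor_mono (by linarith)).trans (Nat.floor_add_one hu0).le)

lemma abs_sub_dyadicFloor_le_geometric (H : DyadicIncrementsLE f T b θ) (hθ0 : 0 ≤ θ)
    (hθ1 : θ < 1) (hf : ContinuousOn f (Icc 0 T)) (hT : 0 < T) {u : ℝ} (hu : u ∈ Icc 0 T)
    (m : ℕ) : |f (dyadicFloor T m u) - f u| ≤ b * θ * θ ^ m / (1 - θ) := by
  have hlim : Tendsto (fun m => f (dyadicFloor T m u)) atTop (𝓝 (f u)) :=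
    (hf u hu).tendsto.comp (tendsto_nhdsWithin_iff.2
      ⟨tendsto_dyadicFloor hT hu.1, Eventually.of_forall (dyadicFloor_mem_Icc hT hu)⟩)
  refine dist_le_of_le_geometric_of_tendsto θ (b * θ) hθ1 (fun k => ?_) hlim m
  rw [dist_comm, Real.dist_eq, mul_assoc, ← pow_succ']
  exact H.abs_sub_dyadicFloor_succ_le hθ0 hT hu k

theorem abs_sub_le (H : DyadicIncrementsLE f T b θ) (hθ0 : 0 ≤ θ) (hθ1 : θ < 1)
    (hf : ContinuousOn f (Icc 0 T)) (hT : 0 < T) {u w : ℝ} (hu : u ∈ Icc 0 T)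
    (hw : w ∈ Icc 0 T) {m : ℕ} (huw : |u - w| ≤ T / 2 ^ m) :
    |f u - f w| ≤ b * (1 + θ) / (1 - θ) * θ ^ m := by
  have hu' := H.abs_sub_dyadicFloor_le_geometric hθ0 hθ1 hf hT hu m
  have hw' := H.abs_sub_dyadicFloor_le_geometric hθ0 hθ1 hf hT hw m
  have hmid := H.abs_sub_dyadicFloor_le hθ0 hT hu hw huw
  rw [abs_sub_comm] at hu'
  have htri := _root_.abs_sub_le (f u) (f (dyadicFloor T m u)) (f w)
  have htri' := _root_.abs_sub_le (f (dyadicFloor T m u)) (f (dyadicFloor T m w)) (f w)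
  have hsplit : b * (1 + θ) / (1 - θ) * θ ^ m
      = b * θ * θ ^ m / (1 - θ) + b * θ ^ m + b * θ * θ ^ m / (1 - θ) := by
    field_simp [(sub_pos.2 hθ1).ne']
    ring
  linarith

theorem abs_sub_le_div (H : DyadicIncrementsLE f T b θ) (hθ0 : 0 ≤ θ) (hθ6 : θ ^ 6 ≤ 1 / 2)
    (hf : ContinuousOn f (Icc 0 T)) (hT : 0 < T) {c : ℝ} (hc0 : 0 ≤ c) (hc : 2 ≤ T * c ^ 6) {n : ℕ}
    (hn : 1 ≤ n) {t s : ℝ} (ht : t ∈ Icc 0 T) (hs : s ∈ Icc 0 T) (hts : |t - s| ≤ ((n : ℝ) ^ 6)⁻¹) :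
    |f t - f s| ≤ b * (1 + θ) / (1 - θ) * c / n := by
  have hθ1 : θ < 1 := (pow_lt_one_iff_of_nonneg hθ0 (by norm_num : 6 ≠ 0)).1 (by linarith)
  have hn0 : (0 : ℝ) < n := by exact_mod_cast hn
  obtain ⟨m, hm_le, hm_lt⟩ := exists_two_pow_le_max_one_lt (T * n ^ 6)
  have h2m : (0 : ℝ) < 2 ^ m := by positivity
  have hclose : |t - s| ≤ T / 2 ^ m := by
    rcases le_max_iff.1 hm_le with h | h
    · have hT' : |t - s| ≤ T :=
        abs_sub_le_iff.2 ⟨by linarith [ht.2, hs.1], by linarith [ht.1, hs.2]⟩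
      exact hT'.trans (le_div_self hT.le h2m h)
    · refine hts.trans ?_
      rw [inv_le_iff_one_le_mul₀ (by positivity), div_mul_eq_mul_div, one_le_div h2m]
      exact h
  have hscale : θ ^ m * n ≤ c := by
    refine le_of_pow_le_pow_left₀ (by norm_num : 6 ≠ 0) hc0 ?_
    have hgrid : (n : ℝ) ^ 6 * T ≤ c ^ 6 * 2 ^ m * T := by
      rw [pow_succ (2 : ℝ) m] at hm_lt
      nlinarith [mul_le_mul_of_nonneg_left hc h2m.le]
    calc (θ ^ m * n : ℝ) ^ 6 = (θ ^ 6) ^ m * (n : ℝ) ^ 6 := by ring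
      _ ≤ (1 / 2 : ℝ) ^ m * (n : ℝ) ^ 6 := by gcongr
      _ ≤ c ^ 6 := by
        rw [one_div_pow, one_div_mul_eq_div, div_le_iff₀ h2m]
        exact le_of_mul_le_mul_right hgrid hT
  have hcoef : 0 ≤ b * (1 + θ) / (1 - θ) :=
    div_nonneg (mul_nonneg H.nonneg (by linarith)) (by linarith)
  calc |f t - f s| ≤ b * (1 + θ) / (1 - θ) * θ ^ m := H.abs_sub_le hθ0 hθ1 hf hT ht hs hclose
    _ ≤ b * (1 + θ) / (1 - θ) * c / n := by
      rw [le_div_iff₀ hn0, mul_assoc]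
      gcongr

end DyadicIncrementsLE

section FourthMoment

variable {Ω : Type*} [MeasurableSpace Ω] {P : Measure Ω}

lemma meas_le_abs_le_lintegral_pow_four_div {X : Ω → ℝ} (hX : AEMeasurable X P) {ε : ℝ}
    (hε : 0 < ε) :
    P {ω | ε ≤ |X ω|} ≤ (∫⁻ ω, ENNReal.ofReal (X ω ^ 4) ∂P) / ENNReal.ofReal (ε ^ 4) := by
  refine (measure_mono fun ω (hω : ε ≤ |X ω|) => ?_).trans
    (meas_ge_le_lintegral_div (by fun_prop) (by positivity) ENNReal.ofReal_ne_top)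
  exact ENNReal.ofReal_le_ofReal
    (by simpa [Even.pow_abs ⟨2, rfl⟩] using pow_le_pow_left₀ hε.le hω 4)

lemma lintegral_ofReal_pow_four_of_map_eq_gaussianReal {X : Ω → ℝ} (hX : Measurable X) {v : ℝ≥0}
    (h : P.map X = gaussianReal 0 v) :
    ∫⁻ ω, ENNReal.ofReal (X ω ^ 4) ∂P = ENNReal.ofReal (3 * (v : ℝ) ^ 2) := by
  rw [← lintegral_ofReal_pow_four_gaussianReal, ← h, lintegral_map (by fun_prop) hX]

theorem measure_not_dyadicIncrementsLE_le {W : ℝ → Ω → ℝ} (hW : ∀ t, Measurable (W t)) {A : ℝ}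
    (hA : 0 ≤ A) (hW4 : ∀ s t, 0 ≤ s → s ≤ t →
      ∫⁻ ω, ENNReal.ofReal ((W t ω - W s ω) ^ 4) ∂P ≤ ENNReal.ofReal (A * (t - s) ^ 2))
    {T b θ : ℝ} (hT : 0 ≤ T) (hb : 0 < b) (hθ : 0 < θ) (hθ4 : 1 < 2 * θ ^ 4) :
    P {ω | ¬ DyadicIncrementsLE (fun t => W t ω) T b θ}
      ≤ ENNReal.ofReal (A * T ^ 2 / b ^ 4 / (1 - (2 * θ ^ 4)⁻¹)) := by
  set r := (2 * θ ^ 4)⁻¹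
  have hr0 : 0 ≤ r := by positivity
  have hr1 : r < 1 := inv_lt_one_of_one_lt₀ hθ4
  set a := A * T ^ 2 / b ^ 4
  have hset : {ω | ¬ DyadicIncrementsLE (fun t => W t ω) T b θ} = ⋃ m, ⋃ k ∈ Finset.range (2 ^ m),
      {ω | b * θ ^ m < |W ((k + 1) * T / 2 ^ m) ω - W (k * T / 2 ^ m) ω|} := by
    ext ω
    simp [DyadicIncrementsLE]
  have hpiece (m k : ℕ) : P {ω | b * θ ^ m < |W ((k + 1) * T / 2 ^ m) ω - W (k * T / 2 ^ m) ω|}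
      ≤ ENNReal.ofReal (a * r ^ m / 2 ^ m) := by
    have h2m : (0 : ℝ) < 2 ^ m := by positivity
    calc P {ω | b * θ ^ m < |W ((k + 1) * T / 2 ^ m) ω - W (k * T / 2 ^ m) ω|}
      _ ≤ P {ω | b * θ ^ m ≤ |W ((k + 1) * T / 2 ^ m) ω - W (k * T / 2 ^ m) ω|} :=
          measure_mono fun ω (hω : b * θ ^ m < _) => hω.le
      _ ≤ (∫⁻ ω, ENNReal.ofReal ((W ((k + 1) * T / 2 ^ m) ω - W (k * T / 2 ^ m) ω) ^ 4) ∂P)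
            / ENNReal.ofReal ((b * θ ^ m) ^ 4) :=
          meas_le_abs_le_lintegral_pow_four_div ((hW _).sub (hW _)).aemeasurable (by positivity)
      _ ≤ ENNReal.ofReal (A * (T / 2 ^ m) ^ 2) / ENNReal.ofReal ((b * θ ^ m) ^ 4) := by
          gcongr
          refine (hW4 _ _ (by positivity) (by gcongr; linarith)).trans_eq ?_
          congr 2
          ring
      _ = ENNReal.ofReal (a * r ^ m / 2 ^ m) := by
          rw [← ENNReal.ofReal_div_of_pos (by positivity)]
          congr 1
          simp only [a, r, inv_pow, mul_pow]
          field_simp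
          ring
  calc _ = P (⋃ m, ⋃ k ∈ Finset.range (2 ^ m),
        {ω | b * θ ^ m < |W ((k + 1) * T / 2 ^ m) ω - W (k * T / 2 ^ m) ω|}) := by rw [hset]
    _ ≤ ∑' m, ∑ k ∈ Finset.range (2 ^ m),
        P {ω | b * θ ^ m < |W ((k + 1) * T / 2 ^ m) ω - W (k * T / 2 ^ m) ω|} :=
      (measure_iUnion_le _).trans (ENNReal.tsum_le_tsum fun m => measure_biUnion_finset_le _ _)
    _ ≤ ∑' m, ∑ k ∈ Finset.range (2 ^ m), ENNReal.ofReal (a * r ^ m / 2 ^ m) := by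
      gcongr with m k
      exact hpiece m k
    _ = ∑' m, ENNReal.ofReal (a * r ^ m) := by
      congr 1
      ext m
      rw [Finset.sum_const, Finset.card_range, nsmul_eq_mul, ← ENNReal.ofReal_natCast,
        ← ENNReal.ofReal_mul (by positivity)]
      congr 1
      push_cast
      field_simp
    _ = ENNReal.ofReal (a / (1 - r)) := by
      rw [← ENNReal.ofReal_tsum_of_nonneg (fun m => by positivity)
        ((summable_geometric_of_lt_one hr0 hr1).mul_left a), tsum_mul_left,
        tsum_geometric_of_lt_one hr0 hr1, div_eq_mul_inv]

theorem measure_not_forall_abs_sub_le_div_le {W : ℝ → Ω → ℝ} (hW : ∀ t, Measurable (W t))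
    (hWc : ∀ ω, Continuous fun t => W t ω) {A : ℝ}
    (hA : 0 ≤ A) (hW4 : ∀ s t, 0 ≤ s → s ≤ t →
      ∫⁻ ω, ENNReal.ofReal ((W t ω - W s ω) ^ 4) ∂P ≤ ENNReal.ofReal (A * (t - s) ^ 2))
    {T θ c L : ℝ} (hT : 0 < T) (hθ0 : 0 < θ) (hθ6 : θ ^ 6 ≤ 1 / 2) (hθ4 : 1 < 2 * θ ^ 4)
    (hc0 : 0 < c) (hc : 2 ≤ T * c ^ 6) (hL : 0 < L) :
    P {ω | ¬ ∀ n : ℕ, 1 ≤ n → ∀ t ∈ Icc 0 T, ∀ s ∈ Icc 0 T,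
        |t - s| ≤ ((n : ℝ) ^ 6)⁻¹ → |W t ω - W s ω| ≤ L / n}
      ≤ ENNReal.ofReal (A * T ^ 2 * ((1 + θ) / (1 - θ) * c) ^ 4 / (1 - (2 * θ ^ 4)⁻¹) / L ^ 4) := by
  have hθ1 : θ < 1 := (pow_lt_one_iff_of_nonneg hθ0.le (by norm_num : 6 ≠ 0)).1 (by linarith)
  have h1θ : 0 < 1 - θ := sub_pos.2 hθ1
  set K := (1 + θ) / (1 - θ) * c
  have hK : 0 < K := mul_pos (div_pos (by linarith) h1θ) hc0
  calc _ ≤ P {ω | ¬ DyadicIncrementsLE (fun t => W t ω) T (L / K) θ} := by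
        refine measure_mono fun ω hω H => hω fun n hn t ht s hs hts => ?_
        calc |W t ω - W s ω| ≤ L / K * (1 + θ) / (1 - θ) * c / n :=
              H.abs_sub_le_div hθ0.le hθ6 (hWc ω).continuousOn hT hc0.le hc hn ht hs hts
          _ = L / n := by simp only [K]; field_simp [h1θ.ne']
    _ ≤ ENNReal.ofReal (A * T ^ 2 / (L / K) ^ 4 / (1 - (2 * θ ^ 4)⁻¹)) :=
        measure_not_dyadicIncrementsLE_le hW hA hW4 hT.le (by positivity) hθ0 hθ4
    _ = ENNReal.ofReal (A * T ^ 2 * K ^ 4 / (1 - (2 * θ ^ 4)⁻¹) / L ^ 4) := by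
        congr 1
        field_simp

end FourthMoment

lemma exists_pos_div_pow_le {C ε : ℝ} (hC : 0 ≤ C) (hε : 0 < ε) {k : ℕ} (hk : k ≠ 0) :
    ∃ L > 0, C / L ^ k ≤ ε := by
  set L := max 1 (C / ε)
  have hL : 1 ≤ L := le_max_left _ _
  refine ⟨L, by positivity, ?_⟩
  calc C / L ^ k ≤ C / L := div_le_div_of_nonneg_left hC (by positivity) (le_self_pow₀ hL hk)
    _ ≤ ε := by
      rw [div_le_iff₀ (by positivity), ← div_le_iff₀' hε]
      exact le_max_right _ _

/-- for a standard Brownian motion `W` on `[0,T]` and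
`Σ_L = {ω : ∀ n ≥ 1, sup_{|t-s| ≤ n⁻⁶, t,s ∈ [0,T]} |W(t) - W(s)| ≤ L/n}`,
there is `C = C(T) > 0` with `P(W ∉ Σ_L) ≤ C / L⁴`; consequently for every `ε > 0`
there is `L_ε` with `P(W ∉ Σ_{L_ε}) ≤ ε`. -/
theorem stmt6 (T : ℝ) (hT : 0 < T) :
    ∃ C > (0 : ℝ), ∀ (Ω : Type) (_ : MeasurableSpace Ω) (P : Measure Ω),
      IsProbabilityMeasure P →
      ∀ W : ℝ → Ω → ℝ, (∀ t, Measurable (W t)) → (∀ ω, Continuous fun t => W t ω) →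
      (∀ s t : ℝ, 0 ≤ s → s ≤ t →
        Measure.map (fun ω => W t ω - W s ω) P =
          ProbabilityTheory.gaussianReal 0 (Real.toNNReal (t - s))) →
      (∀ L > (0 : ℝ),
        P {ω | ¬ ∀ n : ℕ, 1 ≤ n → ∀ t ∈ Set.Icc (0 : ℝ) T, ∀ s ∈ Set.Icc (0 : ℝ) T,
            |t - s| ≤ (((n : ℝ)) ^ 6)⁻¹ → |W t ω - W s ω| ≤ L / n}
          ≤ ENNReal.ofReal (C / L ^ 4)) ∧
      (∀ ε > (0 : ℝ), ∃ L > (0 : ℝ),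
        P {ω | ¬ ∀ n : ℕ, 1 ≤ n → ∀ t ∈ Set.Icc (0 : ℝ) T, ∀ s ∈ Set.Icc (0 : ℝ) T,
            |t - s| ≤ (((n : ℝ)) ^ 6)⁻¹ → |W t ω - W s ω| ≤ L / n}
          ≤ ENNReal.ofReal ε) := by
  obtain ⟨θ, hθ0, hθ6⟩ : ∃ θ : ℝ, 0 < θ ∧ θ ^ 6 = 1 / 2 :=
    ⟨(1 / 2) ^ ((6 : ℕ)⁻¹ : ℝ), by positivity, rpow_inv_natCast_pow (by norm_num) (by norm_num)⟩
  obtain ⟨c, hc0, hc6⟩ : ∃ c : ℝ, 0 < c ∧ c ^ 6 = 2 / T :=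
    ⟨(2 / T) ^ ((6 : ℕ)⁻¹ : ℝ), by positivity, rpow_inv_natCast_pow (by positivity) (by norm_num)⟩
  have hθ1 : θ < 1 := (pow_lt_one_iff_of_nonneg hθ0.le (by norm_num : 6 ≠ 0)).1 (by linarith)
  have hθ4 : 1 < 2 * θ ^ 4 := by
    nlinarith [pow_lt_pow_right_of_lt_one₀ hθ0 hθ1 (by norm_num : 4 < 6)]
  have hC : 0 < 3 * T ^ 2 * ((1 + θ) / (1 - θ) * c) ^ 4 / (1 - (2 * θ ^ 4)⁻¹) :=
    div_pos (by have := sub_pos.2 hθ1; positivity) (sub_pos.2 (inv_lt_one_of_one_lt₀ hθ4))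
  refine ⟨_, hC, fun Ω _ P _ W hW hWc hWlaw => ?_⟩
  have hW4 (s t : ℝ) (hs : 0 ≤ s) (hst : s ≤ t) :
      ∫⁻ ω, ENNReal.ofReal ((W t ω - W s ω) ^ 4) ∂P ≤ ENNReal.ofReal (3 * (t - s) ^ 2) := by
    rw [lintegral_ofReal_pow_four_of_map_eq_gaussianReal (by fun_prop) (hWlaw s t hs hst),
      Real.coe_toNNReal _ (sub_nonneg.2 hst)]
  have hbound := fun L (hL : 0 < L) => measure_not_forall_abs_sub_le_div_le hW hWc (by norm_num)
    hW4 hT hθ0 hθ6.le hθ4 hc0 (by rw [hc6, mul_div_cancel₀ _ hT.ne']) hL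
  refine ⟨hbound, fun ε hε => ?_⟩
  obtain ⟨L, hL, hLε⟩ := exists_pos_div_pow_le hC.le hε (by norm_num : 4 ≠ 0)
  exact ⟨L, hL, (hbound L hL).trans (ENNReal.ofReal_le_ofReal hLε)⟩
end
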